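/- For 0<q<1 and 0 \le k \le n, the quantity f_n(k) = (q;q)_n \binom{n}{k}_q satisfies 0 \le 1 - f_n(k) \le (q^{k+1} + q^{n-k+1})/(1-q). -/

import Mathlib

/-!
Writing `P m = (q;q)_m`, one has `f_n(k) = (P n / P k) * (P n / P (n - k))`, and each ratio is a
tail product `∏_{k ≤ j < n} (1 - q^(j+1))` with factors in `(0, 1]`. Such a product lies in
`[0, 1]`, and by the Weierstrass product inequality `1 - ∏ (1 - x_j) ≤ ∑ x_j` its defect is at most
the geometric tail `∑_{j ≥ k} q^(j+1) = q^(k+1) / (1 - q)`. Finally `1 - A B ≤ (1 - A) + (1 - B)`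
for `A, B ∈ [0, 1]`.
-/

/-- q-Pochhammer symbol (a;q)_m. -/
noncomputable def qPoch (q a : ℝ) (m : ℕ) : ℝ := ∏ j ∈ Finset.range m, (1 - a * q ^ j)

/-- Gaussian (q-)binomial coefficient. -/
noncomputable def qbinom (q : ℝ) (n k : ℕ) : ℝ :=
  qPoch q q n / (qPoch q q k * qPoch q q (n - k))

open Finset

theorem Finset.one_sub_prod_one_sub_le_sum {ι R : Type*} [CommRing R] [LinearOrder R]
    [IsStrictOrderedRing R] (s : Finset ι) {f : ι → R} (h0 : ∀ i ∈ s, 0 ≤ f i)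
    (h1 : ∀ i ∈ s, f i ≤ 1) : 1 - ∏ i ∈ s, (1 - f i) ≤ ∑ i ∈ s, f i := by
  classical
  induction s using Finset.induction_on with
  | empty => simp
  | insert a s ha ih =>
    rw [prod_insert ha, sum_insert ha]
    have hs := ih (fun i hi => h0 i (mem_insert_of_mem hi)) fun i hi => h1 i (mem_insert_of_mem hi)
    have hP : ∏ i ∈ s, (1 - f i) ≤ 1 :=
      prod_le_one (fun i hi => sub_nonneg.2 (h1 i (mem_insert_of_mem hi)))
        fun i hi => sub_le_self _ (h0 i (mem_insert_of_mem hi))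
    have ha0 := h0 a (mem_insert_self a s)
    calc 1 - (1 - f a) * ∏ i ∈ s, (1 - f i)
        = f a * ∏ i ∈ s, (1 - f i) + (1 - ∏ i ∈ s, (1 - f i)) := by ring
      _ ≤ f a + ∑ i ∈ s, f i := add_le_add (mul_le_of_le_one_right ha0 hP) hs

section qPoch

variable {q a : ℝ}

lemma mul_pow_lt_one (ha0 : 0 ≤ a) (ha1 : a < 1) (hq0 : 0 ≤ q) (hq1 : q ≤ 1) (j : ℕ) :
    a * q ^ j < 1 :=
  mul_lt_one_of_nonneg_of_lt_one_left ha0 ha1 (pow_le_one₀ hq0 hq1)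

lemma qPoch_pos (ha0 : 0 ≤ a) (ha1 : a < 1) (hq0 : 0 ≤ q) (hq1 : q ≤ 1) (m : ℕ) :
    0 < qPoch q a m :=
  prod_pos fun j _ => sub_pos.2 (mul_pow_lt_one ha0 ha1 hq0 hq1 j)

lemma qPoch_div_qPoch {k n : ℕ} (hk : k ≤ n) (h : qPoch q a k ≠ 0) :
    qPoch q a n / qPoch q a k = ∏ j ∈ Ico k n, (1 - a * q ^ j) := by
  rw [div_eq_iff h, qPoch, qPoch, ← prod_range_mul_prod_Ico _ hk, mul_comm]

lemma prod_Ico_one_sub_mul_pow_mem_Icc (ha0 : 0 ≤ a) (ha1 : a < 1) (hq0 : 0 ≤ q) (hq1 : q ≤ 1)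
    (k n : ℕ) : ∏ j ∈ Ico k n, (1 - a * q ^ j) ∈ Set.Icc 0 1 := by
  have hx0 : ∀ j, 0 ≤ a * q ^ j := fun j => by positivity
  have hx1 : ∀ j, a * q ^ j < 1 := mul_pow_lt_one ha0 ha1 hq0 hq1
  exact ⟨prod_nonneg fun j _ => sub_nonneg.2 (hx1 j).le,
    prod_le_one (fun j _ => sub_nonneg.2 (hx1 j).le) fun j _ => sub_le_self _ (hx0 j)⟩

lemma one_sub_prod_Ico_one_sub_mul_pow_le (ha0 : 0 ≤ a) (ha1 : a < 1) (hq0 : 0 ≤ q) (hq1 : q < 1)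
    (k n : ℕ) : 1 - ∏ j ∈ Ico k n, (1 - a * q ^ j) ≤ a * q ^ k / (1 - q) :=
  calc 1 - ∏ j ∈ Ico k n, (1 - a * q ^ j)
      ≤ ∑ j ∈ Ico k n, a * q ^ j :=
        one_sub_prod_one_sub_le_sum _ (fun j _ => by positivity)
          fun j _ => (mul_pow_lt_one ha0 ha1 hq0 hq1.le j).le
    _ = a * ∑ j ∈ Ico k n, q ^ j := (mul_sum ..).symm
    _ ≤ a * (q ^ k / (1 - q)) := mul_le_mul_of_nonneg_left (geom_sum_Ico_le_of_lt_one hq0 hq1) ha0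
    _ = a * q ^ k / (1 - q) := mul_div_assoc' ..

end qPoch

lemma qPoch_mul_qbinom (q : ℝ) (n k : ℕ) :
    qPoch q q n * qbinom q n k = qPoch q q n / qPoch q q k * (qPoch q q n / qPoch q q (n - k)) := by
  rw [qbinom, div_mul_div_comm, mul_div_assoc']

lemma qPoch_div_qPoch_bounds {q : ℝ} (hq0 : 0 < q) (hq1 : q < 1) {k n : ℕ} (hk : k ≤ n) :
    qPoch q q n / qPoch q q k ∈ Set.Icc 0 1 ∧
      1 - qPoch q q n / qPoch q q k ≤ q ^ (k + 1) / (1 - q) := by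
  rw [qPoch_div_qPoch hk (qPoch_pos hq0.le hq1 hq0.le hq1.le k).ne', pow_succ']
  exact ⟨prod_Ico_one_sub_mul_pow_mem_Icc hq0.le hq1 hq0.le hq1.le k n,
    one_sub_prod_Ico_one_sub_mul_pow_le hq0.le hq1 hq0.le hq1 k n⟩

theorem stmt2 (q : ℝ) (hq0 : 0 < q) (hq1 : q < 1) (n k : ℕ) (hk : k ≤ n) :
    0 ≤ 1 - qPoch q q n * qbinom q n k ∧
      1 - qPoch q q n * qbinom q n k ≤ (q ^ (k + 1) + q ^ (n - k + 1)) / (1 - q) := by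
  obtain ⟨⟨-, hA1⟩, hA⟩ := qPoch_div_qPoch_bounds hq0 hq1 hk
  obtain ⟨⟨hB0, hB1⟩, hB⟩ := qPoch_div_qPoch_bounds hq0 hq1 (Nat.sub_le n k)
  rw [qPoch_mul_qbinom]
  set A := qPoch q q n / qPoch q q k
  set B := qPoch q q n / qPoch q q (n - k)
  refine ⟨sub_nonneg.2 (mul_le_one₀ hA1 hB0 hB1), ?_⟩
  calc 1 - A * B = (1 - A) + A * (1 - B) := by ring
    _ ≤ (1 - A) + (1 - B) := by gcongr; exact mul_le_of_le_one_left (by linarith) hA1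
    _ ≤ (q ^ (k + 1) + q ^ (n - k + 1)) / (1 - q) := by rw [add_div]; gcongr
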